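/- Let 0 < μ < 1 < ν < 2, s > 0, and let Y : ℕ → ℝ be bounded. Then the discrete Laplace transform of the shifted μ-th Riemann–Liouville fractional difference satisfies ∑_{t=0}^∞ (1/(s+1))^(t+1) · (W_Y(t+1) - W_Y(t)) = s^μ (s+1)^(ν-μ) · ∑_{n=0}^∞ (1/(s+1))^(ν-1+n) Y(n) + ((1-ν) - s^μ (s+1)^(1-μ))·Y(0) - ((1-ν)·Y(0) + Y(1)), where all powers with real exponents are real powers. -/

import Mathlib

open Real Finset

noncomputable def cc (μ : ℝ) (k : ℕ) : ℝ :=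
  Real.Gamma ((k : ℝ) + 1 - μ) / (Real.Gamma (1 - μ) * Real.Gamma ((k : ℝ) + 1))

lemma cc_zero {μ : ℝ} (hμ1 : μ < 1) : cc μ 0 = 1 := by
  have h : Real.Gamma (1 - μ) ≠ 0 := (Real.Gamma_pos_of_pos (by linarith)).ne'
  simp [cc, Real.Gamma_one, h]

lemma cc_succ {μ : ℝ} (hμ1 : μ < 1) (k : ℕ) :
    cc μ (k + 1) = (((k : ℝ) + 1 - μ) / ((k : ℝ) + 1)) * cc μ k := by
  have hk : (0:ℝ) ≤ (k:ℝ) := Nat.cast_nonneg k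
  have h1 : ((k : ℝ) + 1 - μ) ≠ 0 := by nlinarith
  have h2 : ((k : ℝ) + 1) ≠ 0 := by positivity
  have e1 : Real.Gamma (((k : ℕ) + 1 : ℕ) + 1 - μ) = ((k : ℝ) + 1 - μ) * Real.Gamma ((k : ℝ) + 1 - μ) := by
    have := Real.Gamma_add_one h1
    rw [← this]; push_cast; ring_nf
  have e2 : Real.Gamma (((k : ℕ) + 1 : ℕ) + 1) = ((k : ℝ) + 1) * Real.Gamma ((k : ℝ) + 1) := by
    have := Real.Gamma_add_one h2
    rw [← this]; push_cast; ring_nf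
  have hg1 : Real.Gamma ((k : ℝ) + 1) ≠ 0 := (Real.Gamma_pos_of_pos (by have hk : (0:ℝ) ≤ (k:ℝ) := Nat.cast_nonneg k; nlinarith)).ne'
  have hg2 : Real.Gamma (1 - μ) ≠ 0 := (Real.Gamma_pos_of_pos (by linarith)).ne'
  rw [cc, cc, e1, e2]
  field_simp
  try ring
  try (left; trivial)

lemma cc_pos {μ : ℝ} (hμ1 : μ < 1) (k : ℕ) : 0 < cc μ k := by
  have h1 : 0 < Real.Gamma ((k : ℝ) + 1 - μ) := Real.Gamma_pos_of_pos (by have hk : (0:ℝ) ≤ (k:ℝ) := Nat.cast_nonneg k; nlinarith)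
  have h2 : 0 < Real.Gamma (1 - μ) := Real.Gamma_pos_of_pos (by linarith)
  have h3 : 0 < Real.Gamma ((k : ℝ) + 1) := Real.Gamma_pos_of_pos (by have hk : (0:ℝ) ≤ (k:ℝ) := Nat.cast_nonneg k; nlinarith)
  exact div_pos h1 (mul_pos h2 h3)

lemma cc_le_one {μ : ℝ} (hμ0 : 0 < μ) (hμ1 : μ < 1) (k : ℕ) : cc μ k ≤ 1 := by
  induction k with
  | zero => rw [cc_zero hμ1]
  | succ n ih =>
    rw [cc_succ hμ1 n]
    have h2 : ((n : ℝ) + 1 - μ) / ((n : ℝ) + 1) ≤ 1 := by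
      rw [div_le_one (by positivity)]; linarith
    have := cc_pos hμ1 n
    calc ((n : ℝ) + 1 - μ) / ((n : ℝ) + 1) * cc μ n ≤ 1 * cc μ n := by
          apply mul_le_mul_of_nonneg_right h2 this.le
      _ ≤ 1 := by simpa using ih

open Set

lemma cc_abs_le {μ : ℝ} (hμ0 : 0 < μ) (hμ1 : μ < 1) (k : ℕ) : |cc μ k| ≤ 1 := by
  rw [abs_of_pos (cc_pos hμ1 k)]; exact cc_le_one hμ0 hμ1 k

lemma summable_cc {μ : ℝ} (hμ0 : 0 < μ) (hμ1 : μ < 1) {y : ℝ} (hy : |y| < 1) :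
    Summable (fun k : ℕ => cc μ k * y ^ k) := by
  apply Summable.of_norm
  apply Summable.of_nonneg_of_le (fun k => norm_nonneg _) (fun k => ?_)
    (summable_geometric_of_lt_one (abs_nonneg y) hy)
  calc ‖cc μ k * y ^ k‖ = |cc μ k| * |y| ^ k := by
        rw [norm_mul]; simp [abs_pow]
    _ ≤ 1 * |y| ^ k := by
        apply mul_le_mul_of_nonneg_right (cc_abs_le hμ0 hμ1 k) (by positivity)
    _ = |y| ^ k := one_mul _

lemma summable_cc_deriv {μ : ℝ} (hμ0 : 0 < μ) (hμ1 : μ < 1) {b : ℝ} (hb0 : 0 < b)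
    (hb1 : b < 1) {y : ℝ} (hy : |y| ≤ b) :
    Summable (fun k : ℕ => cc μ k * ((k : ℝ) * y ^ (k - 1))) := by
  apply Summable.of_norm
  apply Summable.of_nonneg_of_le (fun k => norm_nonneg _) (fun k => ?_)
    (((summable_pow_mul_geometric_of_norm_lt_one 1 (by rwa [Real.norm_eq_abs, abs_of_pos hb0] : ‖b‖ < 1)).mul_left b⁻¹) :
      Summable (fun k : ℕ => b⁻¹ * ((k : ℝ) ^ 1 * b ^ k)))
  rcases Nat.eq_zero_or_pos k with hk | hk
  · subst hk; simp
  · have h1 : ‖cc μ k * ((k : ℝ) * y ^ (k - 1))‖ ≤ (k : ℝ) * b ^ (k - 1) := by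
      rw [norm_mul, norm_mul, Real.norm_eq_abs, Real.norm_eq_abs, Real.norm_eq_abs, abs_pow]
      have : |(k : ℝ)| = (k : ℝ) := abs_of_nonneg (Nat.cast_nonneg k)
      rw [this]
      calc |cc μ k| * ((k : ℝ) * |y| ^ (k - 1)) ≤ 1 * ((k : ℝ) * b ^ (k - 1)) := by
            apply mul_le_mul (cc_abs_le hμ0 hμ1 k)
            · exact mul_le_mul_of_nonneg_left (pow_le_pow_left₀ (abs_nonneg y) hy _) (Nat.cast_nonneg k)
            · positivity
            · norm_num
        _ = (k : ℝ) * b ^ (k - 1) := one_mul _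
    refine h1.trans ?_
    have : b ^ k = b * b ^ (k - 1) := by
      conv_lhs => rw [show k = 1 + (k - 1) by omega]
      rw [pow_add, pow_one]
    rw [this, pow_one]
    rw [show b⁻¹ * ((k:ℝ) * (b * b ^ (k-1))) = (b⁻¹ * b) * ((k:ℝ) * b ^ (k-1)) by ring,
      inv_mul_cancel₀ hb0.ne']
    simp

lemma binomial_series {μ : ℝ} (hμ0 : 0 < μ) (hμ1 : μ < 1) {x : ℝ} (hx0 : 0 < x) (hx1 : x < 1) :
    ∑' k : ℕ, cc μ k * x ^ k = (1 - x) ^ (μ - 1) := by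
  set b : ℝ := (x + 1) / 2 with hb
  have hxb : x < b := by rw [hb]; linarith
  have hb1 : b < 1 := by rw [hb]; linarith
  have hb0 : 0 < b := by rw [hb]; linarith
  set t : Set ℝ := Set.Ioo (-b) b with ht
  have hto : IsOpen t := isOpen_Ioo
  have htc : IsPreconnected t := isPreconnected_Ioo
  set u : ℕ → ℝ := fun k => b⁻¹ * ((k : ℝ) ^ 1 * b ^ k) with hu
  have hus : Summable u :=
    (summable_pow_mul_geometric_of_norm_lt_one 1
      (by rwa [Real.norm_eq_abs, abs_of_pos hb0] : ‖b‖ < 1)).mul_left b⁻¹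
  set g : ℕ → ℝ → ℝ := fun k y => cc μ k * y ^ k with hgdef
  set g' : ℕ → ℝ → ℝ := fun k y => cc μ k * ((k : ℝ) * y ^ (k - 1)) with hg'def
  have hg : ∀ k, ∀ y ∈ t, HasDerivAt (g k) (g' k y) y := fun k y _ =>
    (hasDerivAt_pow k y).const_mul (cc μ k)
  have hbound : ∀ k, ∀ y ∈ t, ‖g' k y‖ ≤ u k := by
    intro k y hy
    have hyb : |y| ≤ b := by
      rw [abs_le]; exact ⟨hy.1.le, hy.2.le⟩
    rcases Nat.eq_zero_or_pos k with hk | hk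
    · subst hk; simp [hg'def, hu]
    · have h1 : ‖g' k y‖ ≤ (k : ℝ) * b ^ (k - 1) := by
        rw [hg'def]
        simp only []
        rw [norm_mul, norm_mul, Real.norm_eq_abs, Real.norm_eq_abs, Real.norm_eq_abs, abs_pow]
        rw [abs_of_nonneg (Nat.cast_nonneg k : (0:ℝ) ≤ k)]
        calc |cc μ k| * ((k : ℝ) * |y| ^ (k - 1)) ≤ 1 * ((k : ℝ) * b ^ (k - 1)) := by
              apply mul_le_mul (cc_abs_le hμ0 hμ1 k)
              · exact mul_le_mul_of_nonneg_left (pow_le_pow_left₀ (abs_nonneg y) hyb _) (Nat.cast_nonneg k)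
              · positivity
              · norm_num
          _ = (k : ℝ) * b ^ (k - 1) := one_mul _
      refine h1.trans ?_
      have hk' : b ^ k = b * b ^ (k - 1) := by
        conv_lhs => rw [show k = 1 + (k - 1) by omega]
        rw [pow_add, pow_one]
      rw [hu]
      simp only [pow_one]
      rw [hk', show b⁻¹ * ((k:ℝ) * (b * b ^ (k-1))) = (b⁻¹ * b) * ((k:ℝ) * b ^ (k-1)) by ring,
        inv_mul_cancel₀ hb0.ne']
      simp
  have hx_t : x ∈ t := ⟨by linarith, hxb⟩
  have h0_t : (0:ℝ) ∈ t := ⟨by linarith, hb0⟩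
  have hg0 : Summable fun k => g k x := summable_cc hμ0 hμ1 (by rw [abs_of_pos hx0]; exact hx1)
  -- the sum function and its derivative
  set F : ℝ → ℝ := fun y => ∑' k, g k y with hF
  have hFderiv : ∀ y ∈ t, HasDerivAt F (∑' k, g' k y) y := fun y hy =>
    hasDerivAt_tsum_of_isPreconnected hus hto htc hg hbound hx_t hg0 hy
  -- key ODE identity : (1-y) * F'(y) = (1-μ) * F(y) for y ∈ t
  have hkey : ∀ y ∈ t, (1 - y) * (∑' k, g' k y) = (1 - μ) * F y := by
    intro y hy
    have hyb : |y| ≤ b := by rw [abs_le]; exact ⟨hy.1.le, hy.2.le⟩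
    have hyabs : |y| < 1 := lt_of_le_of_lt hyb hb1
    have hsum' : Summable (fun k => g' k y) :=
      Summable.of_norm_bounded hus (fun k => hbound k y hy)
    have hsum1 : Summable (fun k => g' (k + 1) y) := (summable_nat_add_iff 1).mpr hsum'
    have hsumF : Summable (fun k => g k y) := summable_cc hμ0 hμ1 hyabs
    have hD1 : (∑' k, g' k y) = ∑' k, g' (k + 1) y := by
      rw [Summable.tsum_eq_zero_add hsum']
      simp [hg'def]
    have ht1 : ∀ k : ℕ, g' (k + 1) y = ((k : ℝ) + 1 - μ) * (cc μ k * y ^ k) := by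
      intro k
      have hcc : cc μ (k + 1) * ((k : ℝ) + 1) = ((k : ℝ) + 1 - μ) * cc μ k := by
        rw [cc_succ hμ1 k]
        field_simp
      simp only [hg'def, Nat.add_sub_cancel]
      push_cast
      linear_combination y ^ k * hcc
    have ht2 : ∀ k : ℕ, y * g' k y = (k : ℝ) * (cc μ k * y ^ k) := by
      intro k
      rcases Nat.eq_zero_or_pos k with hk | hk
      · subst hk; simp [hg'def]
      · simp only [hg'def]
        have : y ^ (k - 1) * y = y ^ k := by
          rw [← pow_succ]; congr 1; omega
        calc y * (cc μ k * ((k:ℝ) * y ^ (k-1))) = (k : ℝ) * (cc μ k * (y ^ (k-1) * y)) := by ring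
          _ = (k : ℝ) * (cc μ k * y ^ k) := by rw [this]
    have hyD : y * (∑' k, g' k y) = ∑' k : ℕ, (k : ℝ) * (cc μ k * y ^ k) := by
      rw [← tsum_mul_left]
      exact tsum_congr ht2
    have hsum2 : Summable (fun k : ℕ => (k : ℝ) * (cc μ k * y ^ k)) := by
      have := hsum'.mul_left y
      apply this.congr
      intro k; exact ht2 k
    have hsum1' : Summable (fun k : ℕ => ((k : ℝ) + 1 - μ) * (cc μ k * y ^ k)) := by
      apply hsum1.congr
      intro k; exact ht1 k
    calc (1 - y) * (∑' k, g' k y)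
        = (∑' k, g' k y) - y * (∑' k, g' k y) := by ring
      _ = (∑' k : ℕ, ((k : ℝ) + 1 - μ) * (cc μ k * y ^ k)) - ∑' k : ℕ, (k : ℝ) * (cc μ k * y ^ k) := by
          rw [hyD, hD1]
          congr 1
          exact tsum_congr ht1
      _ = ∑' k : ℕ, (((k : ℝ) + 1 - μ) * (cc μ k * y ^ k) - (k : ℝ) * (cc μ k * y ^ k)) := by
          rw [Summable.tsum_sub hsum1' hsum2]
      _ = ∑' k : ℕ, (1 - μ) * (cc μ k * y ^ k) := by
          apply tsum_congr; intro k; ring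
      _ = (1 - μ) * F y := tsum_mul_left
  -- the auxiliary function G is constant on [0, x]
  set G : ℝ → ℝ := fun y => F y * (1 - y) ^ (1 - μ) with hG
  have hsubset : Set.Icc (0:ℝ) x ⊆ t := by
    intro y hy
    exact ⟨by linarith [hy.1], lt_of_le_of_lt hy.2 hxb⟩
  have hGderiv : ∀ y ∈ Set.Icc (0:ℝ) x, HasDerivAt G 0 y := by
    intro y hy
    have hyt : y ∈ t := hsubset hy
    have h1y : 0 < 1 - y := by
      have := hy.2; linarith
    have hrpow : HasDerivAt (fun z : ℝ => (1 - z) ^ (1 - μ))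
        (((1 - μ) * (1 - y) ^ (1 - μ - 1)) * (-1)) y := by
      have hinner : HasDerivAt (fun z : ℝ => 1 - z) (-1) y := by
        simpa using (hasDerivAt_id y).const_sub 1
      exact (Real.hasDerivAt_rpow_const (Or.inl h1y.ne')).comp y hinner
    have hmul : HasDerivAt G _ y := (hFderiv y hyt).mul hrpow
    convert hmul using 1
    have hsplit : (1 - y) ^ (1 - μ) = (1 - y) * (1 - y) ^ (-μ) := by
      rw [show (1 - μ) = 1 + (-μ) by ring, Real.rpow_add h1y, Real.rpow_one]
    have hexp : (1 - μ - 1) = -μ := by ring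
    rw [hexp, hsplit]
    have hk2 := hkey y hyt
    linear_combination (-(1 - y) ^ (-μ)) * hk2
  have hGcont : ContinuousOn G (Set.Icc 0 x) := fun y hy =>
    (hGderiv y hy).continuousAt.continuousWithinAt
  have hGd : ∀ y ∈ Set.Ico (0:ℝ) x, HasDerivWithinAt G 0 (Set.Ici y) y := fun y hy =>
    (hGderiv y (Set.Ico_subset_Icc_self hy)).hasDerivWithinAt
  have hconst : G x = G 0 :=
    constant_of_has_deriv_right_zero hGcont hGd x ⟨hx0.le, le_refl x⟩
  have hG0 : G 0 = 1 := by
    have hF0 : F 0 = 1 := by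
      have he : F 0 = ∑' k : ℕ, g k 0 := rfl
      rw [he, tsum_eq_single 0 (fun k hk => by simp [hgdef, zero_pow hk])]
      simp [hgdef, cc_zero hμ1]
    have he : G 0 = F 0 * (1 - 0) ^ (1 - μ) := rfl
    rw [he, hF0]
    simp [Real.one_rpow]
  have h1x : 0 < 1 - x := by linarith
  have hFx' : (∑' k : ℕ, cc μ k * x ^ k) * (1 - x) ^ (1 - μ) = 1 := by
    have h := hconst.trans hG0
    have he : G x = (∑' k : ℕ, cc μ k * x ^ k) * (1 - x) ^ (1 - μ) := rfl
    rw [he] at h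
    exact h
  have hfin : (∑' k : ℕ, cc μ k * x ^ k) = ((1 - x) ^ (1 - μ))⁻¹ :=
    eq_inv_of_mul_eq_one_left hFx'
  rw [hfin, show (μ - 1 : ℝ) = -(1 - μ) by ring, Real.rpow_neg h1x.le]



/-- Generalized falling factorial `t^(ρ) = Γ(t+1)/Γ(t+1-ρ)` (equal to `0` when
`t+1-ρ` is a pole of `Γ`, by Mathlib's conventions). -/
noncomputable def ffact (t ρ : ℝ) : ℝ := Real.Gamma (t + 1) / Real.Gamma (t + 1 - ρ)

/-- `W_Y(t) = (1/Γ(1-μ)) ∑_{j=0}^{t} (t-μ-j)^(-μ) Y(j+1)`, so that the `μ`-th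
Riemann–Liouville fractional difference of `y` (with `Y(n) = y(ν-2+n)`) at the shifted
point `t+ν-μ` is `Δ^μ y(t+ν-μ) = W_Y(t+1) - W_Y(t)`. -/
noncomputable def WY (μ : ℝ) (Y : ℕ → ℝ) (t : ℕ) : ℝ :=
  (1 / Real.Gamma (1 - μ)) *
    ∑ j ∈ Finset.range (t + 1), ffact ((t : ℝ) - μ - (j : ℝ)) (-μ) * Y (j + 1)

set_option maxHeartbeats 1000000

/-- For `0 < μ < 1 < ν < 2`, `s > 0` and bounded `Y`, the discrete Laplace transform of
the shifted `μ`-th Riemann–Liouville fractional difference satisfies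
`∑_{t=0}^∞ (1/(s+1))^(t+1) (W_Y(t+1) - W_Y(t))
  = s^μ (s+1)^(ν-μ) ∑_{n=0}^∞ (1/(s+1))^(ν-1+n) Y(n)
    + ((1-ν) - s^μ (s+1)^(1-μ)) Y(0) - ((1-ν) Y(0) + Y(1))`. -/
theorem laplace_shifted_fractional_difference (μ ν s : ℝ)
    (hμ0 : 0 < μ) (hμ1 : μ < 1) (hν1 : 1 < ν) (hν2 : ν < 2) (hs : 0 < s)
    (Y : ℕ → ℝ) (hY : ∃ M : ℝ, ∀ n : ℕ, |Y n| ≤ M) :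
    ∑' t : ℕ, (1 / (s + 1)) ^ (t + 1) * (WY μ Y (t + 1) - WY μ Y t)
      = s ^ μ * (s + 1) ^ (ν - μ) * (∑' n : ℕ, (1 / (s + 1)) ^ (ν - 1 + (n : ℝ)) * Y n)
        + ((1 - ν) - s ^ μ * (s + 1) ^ (1 - μ)) * Y 0 - ((1 - ν) * Y 0 + Y 1) := by
  obtain ⟨M, hM⟩ := hY
  have hM0 : 0 ≤ M := le_trans (abs_nonneg _) (hM 0)
  have hs1 : (0:ℝ) < s + 1 := by linarith
  set x : ℝ := 1 / (s + 1) with hxdef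
  have hx0 : 0 < x := by rw [hxdef]; positivity
  have hx1 : x < 1 := by rw [hxdef, div_lt_one hs1]; linarith
  -- W as a convolution
  have hWF : ∀ t : ℕ, WY μ Y t = ∑ j ∈ Finset.range (t+1), cc μ (t - j) * Y (j+1) := by
    intro t
    rw [WY, Finset.mul_sum]
    apply Finset.sum_congr rfl
    intro j hj
    have hjt : j ≤ t := by
      have := Finset.mem_range.mp hj; omega
    have hcast : ((t - j : ℕ) : ℝ) = (t : ℝ) - (j : ℝ) := by
      rw [Nat.cast_sub hjt]
    have hΓ : Real.Gamma (1 - μ) ≠ 0 := (Real.Gamma_pos_of_pos (by linarith)).ne'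
    simp only [ffact, cc, hcast]
    rw [show (t:ℝ) - μ - (j:ℝ) + 1 = (t:ℝ) - (j:ℝ) + 1 - μ by ring,
        show (t:ℝ) - (j:ℝ) + 1 - μ - (-μ) = (t:ℝ) - (j:ℝ) + 1 by ring]
    field_simp
  -- summabilities
  have hccnorm : Summable (fun k : ℕ => ‖cc μ k * x ^ k‖) := by
    apply Summable.of_nonneg_of_le (fun k => norm_nonneg _) (fun k => ?_)
      (summable_geometric_of_lt_one hx0.le hx1)
    rw [norm_mul, Real.norm_eq_abs, Real.norm_eq_abs, abs_pow, abs_of_pos hx0]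
    calc |cc μ k| * x ^ k ≤ 1 * x ^ k :=
          mul_le_mul_of_nonneg_right (cc_abs_le hμ0 hμ1 k) (by positivity)
      _ = x ^ k := one_mul _
  have hTnorm : Summable (fun j : ℕ => ‖x ^ j * Y (j+1)‖) := by
    apply Summable.of_nonneg_of_le (fun k => norm_nonneg _) (fun j => ?_)
      ((summable_geometric_of_lt_one hx0.le hx1).mul_right M)
    rw [norm_mul, Real.norm_eq_abs, Real.norm_eq_abs, abs_pow, abs_of_pos hx0]
    exact mul_le_mul_of_nonneg_left (hM (j+1)) (by positivity)
  have hUnorm : Summable (fun n : ℕ => ‖x ^ n * Y n‖) := by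
    apply Summable.of_nonneg_of_le (fun k => norm_nonneg _) (fun n => ?_)
      ((summable_geometric_of_lt_one hx0.le hx1).mul_right M)
    rw [norm_mul, Real.norm_eq_abs, Real.norm_eq_abs, abs_pow, abs_of_pos hx0]
    exact mul_le_mul_of_nonneg_left (hM n) (by positivity)
  have hUsum : Summable (fun n : ℕ => x ^ n * Y n) := hUnorm.of_norm
  -- Cauchy product
  set T : ℝ := ∑' j : ℕ, x ^ j * Y (j+1) with hTdef
  set C : ℝ := ∑' k : ℕ, cc μ k * x ^ k with hCdef
  have hCeq : C = (1 - x) ^ (μ - 1) := binomial_series hμ0 hμ1 hx0 hx1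
  have hcauchy : HasSum
      (fun t : ℕ => ∑ j ∈ Finset.range (t+1), (x ^ j * Y (j+1)) * (cc μ (t - j) * x ^ (t - j)))
      (T * C) := by
    have H := hasSum_sum_range_mul_of_summable_norm (f := fun j : ℕ => x ^ j * Y (j+1))
      (g := fun k : ℕ => cc μ k * x ^ k) hTnorm hccnorm
    exact H
  set h : ℕ → ℝ := fun t => x ^ t * WY μ Y t with hhdef
  have hWsum : HasSum h (T * C) := by
    have heq : (fun t : ℕ => ∑ j ∈ Finset.range (t+1),
        (x ^ j * Y (j+1)) * (cc μ (t - j) * x ^ (t - j))) = h := by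
      funext t
      rw [hhdef]
      simp only []
      rw [hWF t, Finset.mul_sum]
      apply Finset.sum_congr rfl
      intro j hj
      have hjt : j ≤ t := by have := Finset.mem_range.mp hj; omega
      have hxp : x ^ j * x ^ (t - j) = x ^ t := by
        rw [← pow_add]; congr 1; omega
      calc (x ^ j * Y (j+1)) * (cc μ (t-j) * x ^ (t-j))
          = (x ^ j * x ^ (t-j)) * (cc μ (t-j) * Y (j+1)) := by ring
        _ = x ^ t * (cc μ (t-j) * Y (j+1)) := by rw [hxp]
    rw [← heq]
    exact hcauchy
  have hh : Summable h := hWsum.summable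
  have hS : ∑' t : ℕ, h t = T * C := hWsum.tsum_eq
  have hh0 : h 0 = Y 1 := by
    rw [hhdef]
    simp only [pow_zero, one_mul]
    rw [hWF 0]
    simp [cc_zero hμ1]
  -- LHS computation
  have hLHS : (∑' t : ℕ, x ^ (t+1) * (WY μ Y (t+1) - WY μ Y t))
      = (1 - x) * (T * C) - Y 1 := by
    have hterm : ∀ t : ℕ, x ^ (t+1) * (WY μ Y (t+1) - WY μ Y t) = h (t+1) - x * h t := by
      intro t
      rw [hhdef]
      simp only []
      rw [pow_succ]
      ring
    rw [tsum_congr hterm]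
    have h1 : Summable (fun t => h (t+1)) := (summable_nat_add_iff 1).mpr hh
    have h2 : Summable (fun t => x * h t) := hh.mul_left x
    rw [Summable.tsum_sub h1 h2, tsum_mul_left]
    have h3 : ∑' t : ℕ, h (t+1) = (∑' t : ℕ, h t) - h 0 := by
      have := Summable.tsum_eq_zero_add hh
      linarith
    rw [h3, hS, hh0]
    ring
  -- the U series
  set U : ℝ := ∑' n : ℕ, x ^ n * Y n with hUdef
  have hU : U = Y 0 + x * T := by
    rw [hUdef, Summable.tsum_eq_zero_add hUsum]
    simp only [pow_zero, one_mul]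
    congr 1
    rw [hTdef, ← tsum_mul_left]
    apply tsum_congr
    intro n
    rw [pow_succ]
    ring
  -- RHS series
  have hRsum : (∑' n : ℕ, x ^ (ν - 1 + (n:ℝ)) * Y n) = x ^ (ν - 1 : ℝ) * U := by
    rw [hUdef, ← tsum_mul_left]
    apply tsum_congr
    intro n
    rw [Real.rpow_add hx0, Real.rpow_natCast]
    ring
  -- scalar identities
  have hxs : 1 - x = s / (s+1) := by
    rw [hxdef]; field_simp; ring
  have hxpos' : 0 < 1 - x := by linarith
  have hxinv : (s + 1) * x = 1 := by
    rw [hxdef]; field_simp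
  have e1 : (1 - x) * C = (1 - x) ^ (μ : ℝ) := by
    rw [hCeq]
    nth_rewrite 1 [← Real.rpow_one (1-x)]
    rw [← Real.rpow_add hxpos']
    norm_num
  have e2 : (1 - x) ^ (μ : ℝ) * (s + 1) = s ^ μ * (s + 1) ^ (1 - μ) := by
    rw [hxs, Real.div_rpow hs.le hs1.le, Real.rpow_sub hs1, Real.rpow_one]
    field_simp
  have e3 : x ^ (ν - 1 : ℝ) = ((s+1) ^ (ν-1:ℝ))⁻¹ := by
    rw [hxdef, one_div, Real.inv_rpow hs1.le]
  have e5 : (s+1:ℝ) ^ (ν - μ) * x ^ (ν - 1 : ℝ) = (s+1) ^ (1 - μ) := by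
    rw [e3, ← Real.rpow_neg hs1.le, ← Real.rpow_add hs1]
    norm_num
  have hT : (s + 1) * (U - Y 0) = T := by
    have : U - Y 0 = x * T := by rw [hU]; ring
    rw [this, ← mul_assoc, hxinv, one_mul]
  -- final assembly
  rw [hLHS, hRsum]
  calc (1 - x) * (T * C) - Y 1
      = ((1 - x) * C) * T - Y 1 := by ring
    _ = (1 - x) ^ (μ:ℝ) * ((s + 1) * (U - Y 0)) - Y 1 := by rw [e1, hT]
    _ = ((1 - x) ^ (μ:ℝ) * (s + 1)) * (U - Y 0) - Y 1 := by ring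
    _ = (s ^ μ * (s + 1) ^ (1 - μ)) * (U - Y 0) - Y 1 := by rw [e2]
    _ = s ^ μ * (s + 1) ^ (ν - μ) * (x ^ (ν - 1:ℝ) * U)
        + ((1 - ν) - s ^ μ * (s + 1) ^ (1 - μ)) * Y 0 - ((1 - ν) * Y 0 + Y 1) := by
      linear_combination (-(s ^ μ * U)) * e5
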